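/- For every real number a > 0, ∫₀¹ (1 − (a/(1+a)) z) (ln z) e^{−a z} dz = −(1/(1+a))·(E₁(a) + ln a + γ_EM) − (1 − e^{−a})/(a(1+a)). (This is the evaluation of the integral I₂, equation (28), in the proof of the paper's Theorem 1, with a = k_s² and Ei(−a) = −E₁(a).) -/

import Mathlib

open MeasureTheory Real

/-- The exponential integral `E₁(x) = ∫ₓ^∞ e^{-t}/t dt`. -/
noncomputable def expIntegralE1 (x : ℝ) : ℝ := ∫ t in Set.Ioi x, Real.exp (-t) / t

/-!
Write `1 - a z/(1+a) = (a + (1 - a z))/(1+a)`. Since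
`(z log z e^{-az})' = (1 - a z) log z e^{-az} + e^{-az}` and `z log z e^{-az}` vanishes at `0` and
`1`, the second part contributes `-∫₀¹ e^{-az} = -(1 - e^{-a})/a`. For the first, split
`∫₀¹ = ∫₀^∞ - ∫₁^∞`: the substitution `t = a z` reduces `∫₀^∞ log z e^{-az}` to `Γ'(1) = -γ`, and an
integration by parts on `(1, ∞)` turns `∫₁^∞ log z e^{-az}` into `a⁻¹ ∫₁^∞ e^{-az}/z = E₁(a)/a`.
-/

open Set Filter
open scoped Topology

lemma intervalIntegrable_log_mul_exp_neg_mul (b x y : ℝ) :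
    IntervalIntegrable (fun t => log t * exp (-b * t)) volume x y :=
  intervalIntegral.intervalIntegrable_log'.mul_continuousOn (by fun_prop)

lemma intervalIntegrable_one_sub_mul_mul_log_mul_exp_neg_mul (b x y : ℝ) :
    IntervalIntegrable (fun t => (1 - b * t) * log t * exp (-b * t)) volume x y := by
  simpa only [mul_assoc] using
    (intervalIntegrable_log_mul_exp_neg_mul b x y).continuousOn_mul (g := fun t => 1 - b * t)
      (by fun_prop)

lemma integrableOn_log_mul_exp_neg_mul_Ioi {b : ℝ} (hb : 0 < b) :
    IntegrableOn (fun t => log t * exp (-b * t)) (Ioi 0) := by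
  have hdom : IntegrableOn (fun t => t * exp (-b * t)) (Ioi 1) := by
    simpa using (integrableOn_rpow_mul_exp_neg_mul_rpow (s := 1) (p := 1) (by norm_num)
      one_pos hb).mono_set (Ioi_subset_Ioi zero_le_one)
  have htail : IntegrableOn (fun t => log t * exp (-b * t)) (Ioi 1) := by
    refine hdom.mono' (by fun_prop) ?_
    filter_upwards [ae_restrict_mem measurableSet_Ioi] with t ht
    rw [norm_mul, norm_of_nonneg (log_nonneg ht.le), norm_of_nonneg (exp_pos _).le]
    gcongr
    exact log_le_self (zero_le_one.trans ht.le)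
  rw [← Ioc_union_Ioi_eq_Ioi zero_le_one]
  exact ((intervalIntegrable_log_mul_exp_neg_mul b 0 1).1).union htail

lemma tendsto_log_mul_exp_neg_mul_atTop {b : ℝ} (hb : 0 < b) :
    Tendsto (fun t => log t * exp (-b * t)) atTop (𝓝 0) := by
  refine squeeze_zero' ?_ ?_ (tendsto_rpow_mul_exp_neg_mul_atTop_nhds_zero 1 b hb)
  · filter_upwards [eventually_ge_atTop 1] with t ht
    exact mul_nonneg (log_nonneg ht) (exp_pos _).le
  · filter_upwards [eventually_ge_atTop 1] with t ht
    rw [rpow_one]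
    gcongr
    exact log_le_self (zero_le_one.trans ht)

lemma integral_log_mul_exp_neg_Ioi :
    ∫ t in Ioi 0, log t * exp (-t) = -eulerMascheroniConstant := by
  have hGamma : HasDerivAt Complex.Gamma ((∫ t in Ioi 0, log t * exp (-t) : ℝ) : ℂ) 1 := by
    refine (Complex.hasDerivAt_GammaIntegral (s := 1) one_pos).congr_of_eventuallyEq ?_
      |>.congr_deriv ?_
    · filter_upwards [(isOpen_lt continuous_const Complex.continuous_re).mem_nhds
        (show (0 : ℝ) < (1 : ℂ).re by norm_num)] with s hs
      exact Complex.Gamma_eq_integral hs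
    · rw [← integral_complex_ofReal]
      simp
  exact_mod_cast hGamma.unique Complex.hasDerivAt_Gamma_one

lemma integral_log_mul_exp_neg_mul_Ioi {b : ℝ} (hb : 0 < b) :
    ∫ t in Ioi 0, log t * exp (-b * t) = -(eulerMascheroniConstant + log b) / b := by
  have hscale := integral_comp_mul_left_Ioi (fun t => log t * exp (-t)) 0 hb
  have hsplit : ∀ t ∈ Ioi (0 : ℝ),
      log (b * t) * exp (-(b * t)) = log b * exp (-b * t) + log t * exp (-b * t) := by
    intro t ht
    rw [log_mul hb.ne' (ne_of_gt ht), neg_mul]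
    ring
  rw [mul_zero, integral_log_mul_exp_neg_Ioi, smul_eq_mul,
    setIntegral_congr_fun measurableSet_Ioi hsplit,
    integral_add ((exp_neg_integrableOn_Ioi 0 hb).const_mul _)
      (integrableOn_log_mul_exp_neg_mul_Ioi hb),
    integral_const_mul, integral_exp_mul_Ioi (neg_neg_iff_pos.2 hb)] at hscale
  simp only [neg_mul, mul_zero, exp_zero] at hscale
  field_simp at hscale ⊢
  linarith

lemma integral_exp_neg_mul_div_Ioi_one {b : ℝ} (hb : 0 < b) :
    ∫ t in Ioi 1, exp (-b * t) / t = expIntegralE1 b := by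
  have hscale := integral_comp_mul_left_Ioi (fun t => exp (-t) / t) 1 hb
  have hfun : ∀ t : ℝ, exp (-(b * t)) / (b * t) = b⁻¹ * (exp (-b * t) / t) := by
    intro t
    rw [neg_mul, mul_comm b t, div_mul_eq_div_div, div_eq_mul_inv _ b]
    ring
  simp only [hfun, integral_const_mul, mul_one, smul_eq_mul] at hscale
  exact mul_left_cancel₀ (inv_ne_zero hb.ne') hscale

lemma integrableOn_exp_neg_mul_div_Ioi_one {b : ℝ} (hb : 0 < b) :
    IntegrableOn (fun t => exp (-b * t) / t) (Ioi 1) := by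
  refine (exp_neg_integrableOn_Ioi 1 hb).mono'
    (by fun_prop (disch := skip) : Measurable _).aestronglyMeasurable ?_
  filter_upwards [ae_restrict_mem measurableSet_Ioi] with t ht
  rw [norm_div, norm_of_nonneg (exp_pos _).le, norm_of_nonneg (zero_le_one.trans ht.le)]
  exact div_le_self (exp_pos _).le ht.le

lemma integral_log_mul_exp_neg_mul_Ioi_one {b : ℝ} (hb : 0 < b) :
    ∫ t in Ioi 1, log t * exp (-b * t) = expIntegralE1 b / b := by
  have hv : ∀ t ∈ Ioi (1 : ℝ), HasDerivAt (fun t => -exp (-b * t) / b) (exp (-b * t)) t := by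
    intro t _
    refine (((hasDerivAt_id t).const_mul (-b)).exp.neg.div_const b).congr_deriv ?_
    field_simp
    simp
  have hu : ∀ t ∈ Ioi (1 : ℝ), HasDerivAt log t⁻¹ t :=
    fun t ht => hasDerivAt_log (zero_lt_one.trans ht).ne'
  have hu'v : IntegrableOn (fun t => t⁻¹ * (-exp (-b * t) / b)) (Ioi 1) := by
    refine IntegrableOn.congr_fun ((integrableOn_exp_neg_mul_div_Ioi_one hb).const_mul (-b⁻¹))
      (fun t _ => ?_) measurableSet_Ioi
    ring
  have h_one : Tendsto (fun t => log t * (-exp (-b * t) / b)) (𝓝[>] 1) (𝓝 0) := by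
    have hcont : ContinuousAt (fun t => log t * (-exp (-b * t) / b)) 1 := by
      fun_prop (disch := norm_num)
    simpa using hcont.tendsto.mono_left nhdsWithin_le_nhds
  have h_infty : Tendsto (fun t => log t * (-exp (-b * t) / b)) atTop (𝓝 0) := by
    simpa [mul_div_assoc, mul_neg, neg_div] using
      ((tendsto_log_mul_exp_neg_mul_atTop hb).div_const b).neg
  rw [integral_Ioi_mul_deriv_eq_deriv_mul hu hv
    ((integrableOn_log_mul_exp_neg_mul_Ioi hb).mono_set (Ioi_subset_Ioi zero_le_one))
    hu'v h_one h_infty]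
  have hfun : ∀ t : ℝ, t⁻¹ * (-exp (-b * t) / b) = -(exp (-b * t) / t / b) :=
    fun t => by ring
  simp only [hfun, integral_neg, integral_div, integral_exp_neg_mul_div_Ioi_one hb]
  ring

lemma integral_log_mul_exp_neg_mul_zero_one {b : ℝ} (hb : 0 < b) :
    ∫ t in (0 : ℝ)..1, log t * exp (-b * t)
      = -(expIntegralE1 b + log b + eulerMascheroniConstant) / b := by
  rw [← intervalIntegral.integral_Ioi_sub_Ioi (integrableOn_log_mul_exp_neg_mul_Ioi hb)
      zero_le_one,
    integral_log_mul_exp_neg_mul_Ioi hb, integral_log_mul_exp_neg_mul_Ioi_one hb]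
  ring

lemma integral_one_sub_mul_mul_log_mul_exp_neg_mul {b : ℝ} (hb : b ≠ 0) :
    ∫ t in (0 : ℝ)..1, (1 - b * t) * log t * exp (-b * t) = -(1 - exp (-b)) / b := by
  have hderiv : ∀ t ∈ Ioo (0 : ℝ) 1, HasDerivAt (fun t => t * log t * exp (-b * t))
      ((1 - b * t) * log t * exp (-b * t) + exp (-b * t)) t := by
    intro t ht
    refine ((hasDerivAt_mul_log ht.1.ne').mul
      ((hasDerivAt_id t).const_mul (-b)).exp).congr_deriv ?_
    simp only [id]
    ring
  have hint := intervalIntegrable_one_sub_mul_mul_log_mul_exp_neg_mul b 0 1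
  have hexp_int : IntervalIntegrable (fun t => exp (-b * t)) volume 0 1 :=
    (by fun_prop : Continuous fun t => exp (-b * t)).intervalIntegrable 0 1
  have hexp : ∫ t in (0 : ℝ)..1, exp (-b * t) = (1 - exp (-b)) / b := by
    rw [intervalIntegral.integral_comp_mul_left (fun t => exp t) (neg_ne_zero.2 hb),
      integral_exp, mul_zero, mul_one, exp_zero, smul_eq_mul]
    field_simp
    ring
  have hFTC := intervalIntegral.integral_eq_sub_of_hasDerivAt_of_le zero_le_one
    (by fun_prop) hderiv (hint.add hexp_int)
  rw [intervalIntegral.integral_add hint hexp_int, hexp] at hFTC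
  simp only [log_one, log_zero, mul_zero, zero_mul, sub_zero] at hFTC
  linear_combination hFTC

/-- Evaluation of the integral `I₂`, equation (28), in the proof of the paper's Theorem 1. -/
theorem integral_I2 (a : ℝ) (ha : 0 < a) :
    ∫ z in (0 : ℝ)..1, (1 - (a / (1 + a)) * z) * Real.log z * Real.exp (-a * z)
      = -(1 / (1 + a)) * (expIntegralE1 a + Real.log a + Real.eulerMascheroniConstant)
        - (1 - Real.exp (-a)) / (a * (1 + a)) := by
  have h1a : 1 + a ≠ 0 := by positivity
  have hsplit : ∀ z : ℝ, (1 - (a / (1 + a)) * z) * log z * exp (-a * z)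
      = a / (1 + a) * (log z * exp (-a * z))
        + (1 + a)⁻¹ * ((1 - a * z) * log z * exp (-a * z)) := by
    intro z
    field_simp
    ring
  simp only [hsplit]
  rw [intervalIntegral.integral_add ((intervalIntegrable_log_mul_exp_neg_mul a 0 1).const_mul _)
      ((intervalIntegrable_one_sub_mul_mul_log_mul_exp_neg_mul a 0 1).const_mul _),
    intervalIntegral.integral_const_mul, intervalIntegral.integral_const_mul,
    integral_log_mul_exp_neg_mul_zero_one ha, integral_one_sub_mul_mul_log_mul_exp_neg_mul ha.ne']
  field_simp
  ring
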